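/- arXiv:cs/0308001 — 5 statements merged into one kernel-verified Lean document; each statement's English description precedes it below -/
import Mathlib

section
/- Let A ⊆ ℝ³ be a nonempty compact semi-algebraic set with nonempty interior, and let f : A → ℝ be continuous and, in each of the three coordinates, either strictly increasing, strictly decreasing, or constant (with the other two coordinates fixed). Then the minimum of f over A equals the minimum of f over the boundary ∂A, and the maximum of f over A equals the maximum of f over ∂A. -/
/-!
Fix a coordinate axis. Moving from any point of the compact set `A` parallel to that axis, in
either sense, one eventually leaves `A` and therefore crosses `∂A ⊆ A`. Along the axis `f` is
monotone or constant, so one of the two exit points has a value at most, and one a value at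
least, that of the starting point. Starting from a minimiser (maximiser) of `f` on `A` yields a
point of `∂A` where the minimum (maximum) is attained.
-/

open Set

def IsSemialgebraic {n : ℕ} (A : Set (Fin n → ℝ)) : Prop :=
  ∃ (N : ℕ) (E I : Fin N → Finset (MvPolynomial (Fin n) ℝ)),
    A = ⋃ m, {x | (∀ p ∈ E m, MvPolynomial.eval x p = 0) ∧
                  (∀ p ∈ I m, 0 < MvPolynomial.eval x p)}

/-- A function is regular on `A` if it is continuous on `A` and, in each
coordinate (with the other coordinates fixed), strictly increasing, strictly
decreasing, or constant. -/
def RegularOn {n : ℕ} (f : (Fin n → ℝ) → ℝ) (A : Set (Fin n → ℝ)) : Prop :=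
  ContinuousOn f A ∧
  ∀ i : Fin n,
    (∀ x ∈ A, ∀ y ∈ A, (∀ j, j ≠ i → x j = y j) → x i < y i → f x < f y) ∨
    (∀ x ∈ A, ∀ y ∈ A, (∀ j, j ≠ i → x j = y j) → x i < y i → f y < f x) ∨
    (∀ x ∈ A, ∀ y ∈ A, (∀ j, j ≠ i → x j = y j) → f x = f y)

open Bornology

theorem IsPreconnected.inter_frontier_nonempty {X : Type*} [TopologicalSpace X] {s t : Set X}
    (hs : IsPreconnected s) (hst : (s ∩ t).Nonempty) (hsnt : (s \ t).Nonempty) :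
    (s ∩ frontier t).Nonempty := by
  by_contra hfr
  have hcover : s ⊆ interior t ∪ (closure t)ᶜ := fun y hy => by
    by_contra hy'
    simp only [mem_union, mem_compl_iff, not_or, not_not] at hy'
    exact hfr ⟨y, hy, hy'.2, hy'.1⟩
  have hmeet : (s ∩ interior t).Nonempty := by
    obtain ⟨z, hzs, hzt⟩ := hst
    refine ⟨z, hzs, ?_⟩
    simpa [hzs, subset_closure hzt] using hcover hzs
  have hsub : s ⊆ interior t :=
    hs.subset_left_of_subset_union isOpen_interior isClosed_closure.isOpen_compl
      (disjoint_compl_right.mono_left interior_subset_closure) hcover hmeet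
  obtain ⟨y, hys, hyt⟩ := hsnt
  exact hyt (interior_subset (hsub hys))

theorem Bornology.IsBounded.exists_nonneg_add_smul_mem_frontier {E : Type*}
    [NormedAddCommGroup E] [NormedSpace ℝ E] {A : Set E} (hA : IsBounded A) {x v : E}
    (hx : x ∈ A) (hv : v ≠ 0) : ∃ t : ℝ, 0 ≤ t ∧ x + t • v ∈ frontier A := by
  obtain ⟨R, hR⟩ := hA.exists_norm_le
  set ray := (fun t : ℝ => x + t • v) '' Ici 0
  have hout : (ray \ A).Nonempty := by
    have hR0 : 0 ≤ R + 1 + ‖x‖ := by linarith [norm_nonneg x, hR x hx]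
    set t := (R + 1 + ‖x‖) / ‖v‖
    have ht : ‖t • v‖ = R + 1 + ‖x‖ := by
      rw [norm_smul, Real.norm_of_nonneg (by positivity),
        div_mul_cancel₀ _ (norm_ne_zero_iff.mpr hv)]
    refine ⟨x + t • v, ⟨t, div_nonneg hR0 (norm_nonneg v), rfl⟩, fun hA' => ?_⟩
    have := norm_sub_le (x + t • v) x
    rw [add_sub_cancel_left, ht] at this
    linarith [hR _ hA']
  have hin : (ray ∩ A).Nonempty := ⟨x, ⟨0, mem_Ici.mpr le_rfl, by simp⟩, hx⟩
  obtain ⟨_, ⟨t, ht, rfl⟩, hfr⟩ :=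
    (isPreconnected_Ici.image _ (by fun_prop)).inter_frontier_nonempty hin hout
  exact ⟨t, ht, hfr⟩

theorem exists_mem_frontier_coord_le {n : ℕ} {A : Set (Fin n → ℝ)}
    (hA : IsBounded A) {x : Fin n → ℝ} (hx : x ∈ A) (i : Fin n) :
    ∃ y ∈ frontier A, (∀ j, j ≠ i → y j = x j) ∧ y i ≤ x i := by
  obtain ⟨t, ht, hfr⟩ := hA.exists_nonneg_add_smul_mem_frontier hx
    (neg_ne_zero.mpr (Pi.single_ne_zero_iff.mpr one_ne_zero) : -Pi.single i (1 : ℝ) ≠ 0)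
  exact ⟨_, hfr, fun j hj => by simp [hj], by simpa using ht⟩

theorem exists_mem_frontier_coord_ge {n : ℕ} {A : Set (Fin n → ℝ)}
    (hA : IsBounded A) {x : Fin n → ℝ} (hx : x ∈ A) (i : Fin n) :
    ∃ y ∈ frontier A, (∀ j, j ≠ i → x j = y j) ∧ x i ≤ y i := by
  obtain ⟨t, ht, hfr⟩ := hA.exists_nonneg_add_smul_mem_frontier hx
    (Pi.single_ne_zero_iff.mpr one_ne_zero : Pi.single i (1 : ℝ) ≠ 0)
  exact ⟨_, hfr, fun j hj => by simp [hj], by simpa using ht⟩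

theorem le_of_coord_le_of_strictMono_coord {n : ℕ} {β : Type*} [Preorder β]
    {f : (Fin n → ℝ) → β} {A : Set (Fin n → ℝ)} {i : Fin n}
    (hmono : ∀ x ∈ A, ∀ y ∈ A, (∀ j, j ≠ i → x j = y j) → x i < y i → f x < f y)
    {x y : Fin n → ℝ} (hx : x ∈ A) (hy : y ∈ A) (hxy : ∀ j, j ≠ i → x j = y j)
    (hi : x i ≤ y i) : f x ≤ f y := by
  rcases hi.lt_or_eq with hlt | heq
  · exact (hmono x hx y hy hxy hlt).le
  · have : x = y := funext fun j => if hj : j = i then hj ▸ heq else hxy j hj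
    rw [this]

theorem RegularOn.neg {n : ℕ} {f : (Fin n → ℝ) → ℝ} {A : Set (Fin n → ℝ)}
    (hf : RegularOn f A) : RegularOn (fun x => -f x) A := by
  refine ⟨hf.1.neg, fun i => ?_⟩
  rcases hf.2 i with hinc | hdec | hconst
  · exact Or.inr (Or.inl fun x hx y hy hxy hlt => neg_lt_neg (hinc x hx y hy hxy hlt))
  · exact Or.inl fun x hx y hy hxy hlt => neg_lt_neg (hdec x hx y hy hxy hlt)
  · exact Or.inr (Or.inr fun x hx y hy hxy => congrArg Neg.neg (hconst x hx y hy hxy))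

theorem RegularOn.exists_mem_frontier_le {n : ℕ} {f : (Fin n → ℝ) → ℝ}
    {A : Set (Fin n → ℝ)} (hf : RegularOn f A) (hA : IsCompact A) (i : Fin n)
    {x : Fin n → ℝ} (hx : x ∈ A) :
    ∃ y ∈ frontier A, f y ≤ f x := by
  have hfr : frontier A ⊆ A := hA.isClosed.frontier_subset
  obtain ⟨y, hy, hyx, hyi⟩ := exists_mem_frontier_coord_le hA.isBounded hx i
  obtain ⟨z, hz, hxz, hzi⟩ := exists_mem_frontier_coord_ge hA.isBounded hx i
  rcases hf.2 i with hinc | hdec | hconst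
  · exact ⟨y, hy, le_of_coord_le_of_strictMono_coord hinc (hfr hy) hx hyx hyi⟩
  · exact ⟨z, hz,
      le_of_coord_le_of_strictMono_coord (β := ℝᵒᵈ) hdec hx (hfr hz) hxz hzi⟩
  · exact ⟨y, hy, (hconst y (hfr hy) x hx hyx).le⟩

theorem RegularOn.exists_mem_frontier_ge {n : ℕ} {f : (Fin n → ℝ) → ℝ}
    {A : Set (Fin n → ℝ)} (hf : RegularOn f A) (hA : IsCompact A) (i : Fin n)
    {x : Fin n → ℝ} (hx : x ∈ A) :
    ∃ y ∈ frontier A, f x ≤ f y := by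
  obtain ⟨y, hy, hyx⟩ := hf.neg.exists_mem_frontier_le hA i hx
  exact ⟨y, hy, neg_le_neg_iff.mp hyx⟩

theorem IsMinOn.csInf_image_eq {α β : Type*} [ConditionallyCompleteLinearOrder β] {f : α → β}
    {s t : Set α} {a : α} (hmin : IsMinOn f s a) (hts : t ⊆ s) (ha : a ∈ t) :
    sInf (f '' s) = sInf (f '' t) := by
  have hleast : ∀ u ⊆ s, a ∈ u → IsLeast (f '' u) (f a) := fun u hus hau =>
    ⟨mem_image_of_mem f hau, forall_mem_image.mpr fun _ hx => hmin (hus hx)⟩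
  rw [(hleast s subset_rfl (hts ha)).csInf_eq, (hleast t hts ha).csInf_eq]

theorem IsMaxOn.csSup_image_eq {α β : Type*} [ConditionallyCompleteLinearOrder β] {f : α → β}
    {s t : Set α} {a : α} (hmax : IsMaxOn f s a) (hts : t ⊆ s) (ha : a ∈ t) :
    sSup (f '' s) = sSup (f '' t) :=
  IsMinOn.csInf_image_eq (β := βᵒᵈ) hmax hts ha

theorem stmt2_general (A : Set (Fin 3 → ℝ)) (f : (Fin 3 → ℝ) → ℝ)
    (hne : A.Nonempty) (hcpt : IsCompact A) (hf : RegularOn f A) :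
    sInf (f '' A) = sInf (f '' frontier A) ∧
    sSup (f '' A) = sSup (f '' frontier A) := by
  have hfr : frontier A ⊆ A := hcpt.isClosed.frontier_subset
  obtain ⟨a, ha, hmin⟩ := hcpt.exists_isMinOn hne hf.1
  obtain ⟨b, hb, hmax⟩ := hcpt.exists_isMaxOn hne hf.1
  obtain ⟨a', ha', ha'a⟩ := hf.exists_mem_frontier_le hcpt 0 ha
  obtain ⟨b', hb', hbb'⟩ := hf.exists_mem_frontier_ge hcpt 0 hb
  have hmin' : IsMinOn f A a' := fun _ hx => ha'a.trans (hmin hx)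
  have hmax' : IsMaxOn f A b' := fun _ hx => (hmax hx).trans hbb'
  exact ⟨hmin'.csInf_image_eq hfr ha', hmax'.csSup_image_eq hfr hb'⟩

theorem stmt2 (A : Set (Fin 3 → ℝ)) (f : (Fin 3 → ℝ) → ℝ)
    (hne : A.Nonempty) (hcpt : IsCompact A) (hint : (interior A).Nonempty)
    (hsa : IsSemialgebraic A) (hf : RegularOn f A) :
    sInf (f '' A) = sInf (f '' frontier A) ∧
    sSup (f '' A) = sSup (f '' frontier A) :=
  stmt2_general A f hne hcpt hf
end

section
/- Let U ⊆ ℝ³ be a nonempty open semi-algebraic set and let e be a ternary cartesian-product-free relational algebra expression over a ternary set variable S (built using only S, ternary constant semi-algebraic sets, union, intersection, and difference; no products or projections). Then there exists a nonempty open set V ⊆ U and a semi-algebraic set Γ ⊆ ℝ³ such that for all S ⊆ V, the value e(S) equals one of: Γ, S, S ∪ Γ, or Γ − S; and in the last case V may be chosen inside the interior of Γ. -/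
open Set

/-- Cartesian-product-free (and projection-free) relational algebra
expressions over a ternary set variable, with semi-algebraic constants. -/
inductive BExpr : Type 1 where
  | var : BExpr
  | const : (C : Set (Fin 3 → ℝ)) → IsSemialgebraic C → BExpr
  | union : BExpr → BExpr → BExpr
  | inter : BExpr → BExpr → BExpr
  | diff : BExpr → BExpr → BExpr

def BExpr.eval : BExpr → Set (Fin 3 → ℝ) → Set (Fin 3 → ℝ)
  | .var, S => S
  | .const C _, _ => C
  | .union e₁ e₂, S => e₁.eval S ∪ e₂.eval S
  | .inter e₁ e₂, S => e₁.eval S ∩ e₂.eval S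
  | .diff e₁ e₂, S => e₁.eval S \ e₂.eval S

/-!
Membership of a point in `e.eval S` depends only on whether the point lies in `S`, so
`e.eval S = S ∩ T ∪ F \ S` with `T = e.eval univ` and `F = e.eval ∅`, both semialgebraic.
A semialgebraic set is a finite union of sets of the form closed ∩ open, so its frontier is
nowhere dense, and every nonempty open set contains a nonempty open set lying either in the
interior of it or in its complement. Shrinking `U` first with respect to `T` and then with respect
to `F` gives `e.eval S = S ∪ F`, or `e.eval S = F \ S` with `V ⊆ interior F`, or `e.eval S = F`.
-/

open MvPolynomial

section Semialgebraic

variable {n : ℕ}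

def basicSemialgebraicSet (E I : Finset (MvPolynomial (Fin n) ℝ)) : Set (Fin n → ℝ) :=
  {x | (∀ p ∈ E, eval x p = 0) ∧ ∀ p ∈ I, 0 < eval x p}

theorem basicSemialgebraicSet_inter (E I E' I' : Finset (MvPolynomial (Fin n) ℝ)) :
    basicSemialgebraicSet E I ∩ basicSemialgebraicSet E' I' =
      basicSemialgebraicSet (E ∪ E') (I ∪ I') := by
  ext x
  simp only [basicSemialgebraicSet, mem_inter_iff, mem_ofPred_eq, Finset.mem_union, or_imp,
    forall_and]
  tauto

theorem isSemialgebraic_iUnion_basicSemialgebraicSet {ι : Type*} [Finite ι]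
    (E I : ι → Finset (MvPolynomial (Fin n) ℝ)) :
    IsSemialgebraic (⋃ i, basicSemialgebraicSet (E i) (I i)) := by
  obtain ⟨N, ⟨σ⟩⟩ := Finite.exists_equiv_fin ι
  exact ⟨N, E ∘ σ.symm, I ∘ σ.symm,
    (σ.symm.surjective.iUnion_comp fun i => basicSemialgebraicSet (E i) (I i)).symm⟩

theorem isSemialgebraic_basicSemialgebraicSet (E I : Finset (MvPolynomial (Fin n) ℝ)) :
    IsSemialgebraic (basicSemialgebraicSet E I) := by
  have := isSemialgebraic_iUnion_basicSemialgebraicSet (fun _ : Unit => E) (fun _ => I)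
  rwa [iUnion_const] at this

theorem isSemialgebraic_empty : IsSemialgebraic (∅ : Set (Fin n → ℝ)) := by
  simpa using isSemialgebraic_iUnion_basicSemialgebraicSet (n := n) (Empty.elim) (Empty.elim)

theorem isSemialgebraic_univ : IsSemialgebraic (univ : Set (Fin n → ℝ)) := by
  simpa [basicSemialgebraicSet] using isSemialgebraic_basicSemialgebraicSet (n := n) ∅ ∅

theorem compl_basicSemialgebraicSet (E I : Finset (MvPolynomial (Fin n) ℝ)) :
    (basicSemialgebraicSet E I)ᶜ =
      (⋃ p ∈ E, basicSemialgebraicSet ∅ {-p} ∪ basicSemialgebraicSet ∅ {p}) ∪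
        ⋃ p ∈ I, basicSemialgebraicSet {p} ∅ ∪ basicSemialgebraicSet ∅ {-p} := by
  ext x
  simp only [basicSemialgebraicSet, mem_compl_iff, mem_ofPred_eq, not_and_or, not_forall,
    not_lt, mem_union, mem_iUnion, exists_prop, Finset.notMem_empty, Finset.mem_singleton,
    forall_eq, map_neg, neg_pos, IsEmpty.forall_iff, implies_true, true_and, and_true,
    lt_or_lt_iff_ne, ← le_iff_eq_or_lt, ne_eq]

namespace IsSemialgebraic

variable {A B : Set (Fin n → ℝ)}

theorem union (hA : IsSemialgebraic A) (hB : IsSemialgebraic B) : IsSemialgebraic (A ∪ B) := by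
  obtain ⟨N, E, I, rfl⟩ := hA
  obtain ⟨M, E', I', rfl⟩ := hB
  have := isSemialgebraic_iUnion_basicSemialgebraicSet (Sum.elim E E') (Sum.elim I I')
  simp only [iUnion_sum, Sum.elim_inl, Sum.elim_inr] at this
  exact this

theorem inter (hA : IsSemialgebraic A) (hB : IsSemialgebraic B) : IsSemialgebraic (A ∩ B) := by
  obtain ⟨N, E, I, rfl⟩ := hA
  obtain ⟨M, E', I', rfl⟩ := hB
  have := isSemialgebraic_iUnion_basicSemialgebraicSet
    (fun k : Fin N × Fin M => E k.1 ∪ E' k.2) (fun k => I k.1 ∪ I' k.2)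
  simp only [iUnion_prod', ← basicSemialgebraicSet_inter, ← iUnion_inter_iUnion] at this
  exact this

theorem supClosed : SupClosed {A : Set (Fin n → ℝ) | IsSemialgebraic A} :=
  fun _ hA _ hB => hA.union hB

theorem infClosed : InfClosed {A : Set (Fin n → ℝ) | IsSemialgebraic A} :=
  fun _ hA _ hB => hA.inter hB

theorem compl (hA : IsSemialgebraic A) : IsSemialgebraic Aᶜ := by
  obtain ⟨N, E, I, rfl⟩ := hA
  rw [compl_iUnion]
  refine infClosed.iInf_mem isSemialgebraic_univ fun m => ?_
  change IsSemialgebraic (basicSemialgebraicSet (E m) (I m))ᶜ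
  rw [compl_basicSemialgebraicSet]
  refine (supClosed.biSup_mem (E m).finite_toSet isSemialgebraic_empty fun p _ => ?_).union
    (supClosed.biSup_mem (I m).finite_toSet isSemialgebraic_empty fun p _ => ?_)
  all_goals
    exact (isSemialgebraic_basicSemialgebraicSet _ _).union
      (isSemialgebraic_basicSemialgebraicSet _ _)

theorem diff (hA : IsSemialgebraic A) (hB : IsSemialgebraic B) : IsSemialgebraic (A \ B) :=
  hA.inter hB.compl

end IsSemialgebraic

end Semialgebraic

section NowhereDenseFrontier

variable {X : Type*} [TopologicalSpace X]

theorem IsNowhereDense.union {s t : Set X} (hs : IsNowhereDense s) (ht : IsNowhereDense t) :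
    IsNowhereDense (s ∪ t) := by
  rw [IsNowhereDense, closure_union, interior_union_isClosed_of_interior_empty isClosed_closure ht,
    hs]

variable (X) in
def nowhereDenseFrontier : BooleanSubalgebra (Set X) where
  carrier := {s | IsNowhereDense (frontier s)}
  supClosed' _ hs _ ht := (hs.union ht).mono <|
    (frontier_union_subset _ _).trans (union_subset_union inter_subset_left inter_subset_right)
  infClosed' _ hs _ ht := (hs.union ht).mono <|
    (frontier_inter_subset _ _).trans (union_subset_union inter_subset_left inter_subset_right)
  compl_mem' {s} hs := by rwa [mem_ofPred_eq, frontier_compl]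
  bot_mem' := by simp

theorem mem_nowhereDenseFrontier {s : Set X} :
    s ∈ nowhereDenseFrontier X ↔ IsNowhereDense (frontier s) := Iff.rfl

theorem IsClosed.mem_nowhereDenseFrontier {s : Set X} (hs : IsClosed s) :
    s ∈ nowhereDenseFrontier X :=
  isClosed_frontier.isNowhereDense_iff.2 (interior_frontier hs)

theorem IsOpen.mem_nowhereDenseFrontier {s : Set X} (hs : IsOpen s) :
    s ∈ nowhereDenseFrontier X :=
  compl_compl s ▸ BooleanSubalgebra.compl_mem hs.isClosed_compl.mem_nowhereDenseFrontier

theorem exists_isOpen_subset_interior_or_subset_compl {s V : Set X}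
    (hs : IsNowhereDense (frontier s)) (hV : IsOpen V) (hVne : V.Nonempty) :
    ∃ W, W.Nonempty ∧ IsOpen W ∧ W ⊆ V ∧ (W ⊆ interior s ∨ W ⊆ sᶜ) := by
  have hV_frontier : ¬ V ⊆ frontier s := fun h =>
    hVne.ne_empty <| subset_empty_iff.1 <|
      isClosed_frontier.isNowhereDense_iff.1 hs ▸ interior_maximal h hV
  obtain ⟨x, hxV, hx⟩ := not_subset.1 hV_frontier
  by_cases hxs : x ∈ interior s
  · exact ⟨V ∩ interior s, ⟨x, hxV, hxs⟩, hV.inter isOpen_interior, inter_subset_left,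
      .inl inter_subset_right⟩
  · have hxs' : x ∉ closure s := fun h => hx ⟨h, hxs⟩
    exact ⟨V \ closure s, ⟨x, hxV, hxs'⟩, hV.sdiff isClosed_closure, sdiff_subset,
      .inr fun y hy hys => hy.2 (subset_closure hys)⟩

end NowhereDenseFrontier

theorem IsSemialgebraic.isNowhereDense_frontier {n : ℕ} {A : Set (Fin n → ℝ)}
    (hA : IsSemialgebraic A) : IsNowhereDense (frontier A) := by
  obtain ⟨N, E, I, rfl⟩ := hA
  rw [← mem_nowhereDenseFrontier]
  refine BooleanSubalgebra.iSup_mem fun m => BooleanSubalgebra.inf_mem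
    (a := {x | ∀ p ∈ E m, eval x p = 0}) (b := {x | ∀ p ∈ I m, 0 < eval x p}) ?_ ?_
  · simp only [ofPred_forall]
    exact (isClosed_biInter fun p _ =>
      isClosed_eq (continuous_eval p) continuous_const).mem_nowhereDenseFrontier
  · simp only [ofPred_forall]
    exact (isOpen_biInter_finset fun p _ =>
      isOpen_lt continuous_const (continuous_eval p)).mem_nowhereDenseFrontier

namespace BExpr

theorem isSemialgebraic_eval (e : BExpr) {S : Set (Fin 3 → ℝ)} (hS : IsSemialgebraic S) :
    IsSemialgebraic (e.eval S) := by
  induction e with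
  | var => exact hS
  | const C hC => exact hC
  | union _ _ h₁ h₂ => exact h₁.union h₂
  | inter _ _ h₁ h₂ => exact h₁.inter h₂
  | diff _ _ h₁ h₂ => exact h₁.diff h₂

theorem eval_eq_inter_union_sdiff (e : BExpr) (S : Set (Fin 3 → ℝ)) :
    e.eval S = S ∩ e.eval univ ∪ e.eval ∅ \ S := by
  induction e with
  | var => simp [eval]
  | const C _ => simp only [eval, inter_comm S, inter_union_sdiff]
  | union _ _ h₁ h₂ | inter _ _ h₁ h₂ | diff _ _ h₁ h₂ =>
    simp only [eval, h₁, h₂]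
    ext x
    simp only [mem_union, mem_inter_iff, mem_sdiff]
    tauto

end BExpr

theorem stmt11_general (U : Set (Fin 3 → ℝ)) (hUne : U.Nonempty) (hUop : IsOpen U)
    (e : BExpr) :
    ∃ (V : Set (Fin 3 → ℝ)) (Γ : Set (Fin 3 → ℝ)),
      V.Nonempty ∧ IsOpen V ∧ V ⊆ U ∧ IsSemialgebraic Γ ∧
      ((∀ S : Set (Fin 3 → ℝ), S ⊆ V → e.eval S = Γ) ∨
       (∀ S : Set (Fin 3 → ℝ), S ⊆ V → e.eval S = S) ∨
       (∀ S : Set (Fin 3 → ℝ), S ⊆ V → e.eval S = S ∪ Γ) ∨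
       (V ⊆ interior Γ ∧ ∀ S : Set (Fin 3 → ℝ), S ⊆ V → e.eval S = Γ \ S)) := by
  have hT := e.isSemialgebraic_eval isSemialgebraic_univ
  have hF := e.isSemialgebraic_eval isSemialgebraic_empty
  obtain ⟨V₁, hV₁ne, hV₁, hV₁U, hV₁T | hV₁T⟩ :=
    exists_isOpen_subset_interior_or_subset_compl hT.isNowhereDense_frontier hUop hUne
  · refine ⟨V₁, e.eval ∅, hV₁ne, hV₁, hV₁U, hF, .inr <| .inr <| .inl fun S hS => ?_⟩
    rw [e.eval_eq_inter_union_sdiff, inter_eq_left.2 (hS.trans (hV₁T.trans interior_subset)),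
      union_sdiff_self]
  obtain ⟨V₂, hV₂ne, hV₂, hV₂V₁, hV₂F⟩ :=
    exists_isOpen_subset_interior_or_subset_compl hF.isNowhereDense_frontier hV₁ hV₁ne
  have heval (S) (hS : S ⊆ V₂) : e.eval S = e.eval ∅ \ S := by
    rw [e.eval_eq_inter_union_sdiff,
      (subset_compl_iff_disjoint_right.1 (hS.trans (hV₂V₁.trans hV₁T))).inter_eq, empty_union]
  refine ⟨V₂, e.eval ∅, hV₂ne, hV₂, hV₂V₁.trans hV₁U, hF, ?_⟩
  rcases hV₂F with hV₂F | hV₂F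
  · exact .inr <| .inr <| .inr ⟨hV₂F, heval⟩
  · exact .inl fun S hS => (heval S hS).trans <| sdiff_eq_left.2 <|
      (subset_compl_iff_disjoint_right.1 (hS.trans hV₂F)).symm

theorem stmt11 (U : Set (Fin 3 → ℝ)) (hUne : U.Nonempty) (hUop : IsOpen U)
    (hUsa : IsSemialgebraic U) (e : BExpr) :
    ∃ (V : Set (Fin 3 → ℝ)) (Γ : Set (Fin 3 → ℝ)),
      V.Nonempty ∧ IsOpen V ∧ V ⊆ U ∧ IsSemialgebraic Γ ∧
      ((∀ S : Set (Fin 3 → ℝ), S ⊆ V → e.eval S = Γ) ∨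
       (∀ S : Set (Fin 3 → ℝ), S ⊆ V → e.eval S = S) ∨
       (∀ S : Set (Fin 3 → ℝ), S ⊆ V → e.eval S = S ∪ Γ) ∨
       (V ⊆ interior Γ ∧ ∀ S : Set (Fin 3 → ℝ), S ⊆ V → e.eval S = Γ \ S)) :=
  stmt11_general U hUne hUop e
end

section
/- For semi-algebraic Γ₁, Γ₂ ⊆ ℝ³ and any nonempty open semi-algebraic U ⊆ ℝ³, there is a nonempty open V ⊆ U such that either (i) for all S ⊆ V, (Γ₁ − S) ∪ Γ₂ = Γ₁ ∪ Γ₂, or (ii) V ⊆ interior(Γ₁ ∪ Γ₂) and for all S ⊆ V, (Γ₁ − S) ∪ Γ₂ = (Γ₁ ∪ Γ₂) − S. -/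
open Set

/-- Evaluation of a multivariate polynomial is analytic, hence continuous, and
vanishing on a nonempty open set forces it to vanish everywhere. -/
lemma eval_analytic {n : ℕ} (p : MvPolynomial (Fin n) ℝ) :
    AnalyticOnNhd ℝ (fun x : Fin n → ℝ => MvPolynomial.eval x p) Set.univ :=
  AnalyticOnNhd.eval_continuousLinearMap (ContinuousLinearMap.id ℝ (Fin n → ℝ)) p

lemma eval_continuous {n : ℕ} (p : MvPolynomial (Fin n) ℝ) :
    Continuous (fun x : Fin n → ℝ => MvPolynomial.eval x p) := by
  rw [← continuousOn_univ]
  exact (eval_analytic p).continuousOn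

lemma eval_zero_of_open {n : ℕ} (p : MvPolynomial (Fin n) ℝ)
    (V : Set (Fin n → ℝ)) (hVne : V.Nonempty) (hVop : IsOpen V)
    (h : ∀ x ∈ V, MvPolynomial.eval x p = 0) :
    ∀ x, MvPolynomial.eval x p = 0 := by
  obtain ⟨z, hz⟩ := hVne
  have := AnalyticOnNhd.eqOn_zero_of_preconnected_of_eventuallyEq_zero
    (eval_analytic p) isPreconnected_univ (z₀ := z) (Set.mem_univ z) ?_
  · intro x; exact this (Set.mem_univ x)
  · filter_upwards [hVop.mem_nhds hz] with x hx using h x hx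

/-- Partition lemma: inside any nonempty open set `U` there is a nonempty open `V`
with either `V ⊆ Γ` or `V ∩ Γ = ∅`, when `Γ` is semialgebraic. -/
lemma partition_lemma {n : ℕ} (Γ : Set (Fin n → ℝ)) (hΓ : IsSemialgebraic Γ)
    (U : Set (Fin n → ℝ)) (hUne : U.Nonempty) (hUop : IsOpen U) :
    ∃ V : Set (Fin n → ℝ), V.Nonempty ∧ IsOpen V ∧ V ⊆ U ∧ (V ⊆ Γ ∨ V ∩ Γ = ∅) := by
  by_cases hc : (U \ closure Γ).Nonempty
  · refine ⟨U \ closure Γ, hc, hUop.sdiff isClosed_closure, diff_subset, Or.inr ?_⟩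
    apply Set.eq_empty_of_forall_notMem
    rintro x ⟨⟨_, hx2⟩, hx3⟩
    exact hx2 (subset_closure hx3)
  · -- U ⊆ closure Γ
    have hUcl : U ⊆ closure Γ := by
      intro x hx
      by_contra h
      exact hc ⟨x, hx, h⟩
    obtain ⟨N, E, I, hrep⟩ := hΓ
    set piece : Fin N → Set (Fin n → ℝ) :=
      fun m => {x | (∀ p ∈ E m, MvPolynomial.eval x p = 0) ∧
                    (∀ p ∈ I m, 0 < MvPolynomial.eval x p)} with hpiece
    -- closed sets covering univ
    set C : Option (Fin N) → Set (Fin n → ℝ) :=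
      fun o => Option.elim o Uᶜ (fun m => closure (piece m)) with hC
    have hCclosed : ∀ o, IsClosed (C o) := by
      rintro (_ | m)
      · exact hUop.isClosed_compl
      · exact isClosed_closure
    have hcover : (⋃ o, C o) = Set.univ := by
      apply Set.eq_univ_of_forall
      intro x
      by_cases hxU : x ∈ U
      · have hxcl : x ∈ closure Γ := hUcl hxU
        have : x ∈ closure (⋃ m, closure (piece m)) := by
          apply closure_mono (s := Γ) ?_ hxcl
          rw [hrep]
          exact Set.iUnion_mono fun m => subset_closure
        have hclosed : IsClosed (⋃ m, closure (piece m)) :=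
          isClosed_iUnion_of_finite fun m => isClosed_closure
        rw [hclosed.closure_eq] at this
        obtain ⟨m, hm⟩ := Set.mem_iUnion.1 this
        exact Set.mem_iUnion.2 ⟨some m, hm⟩
      · exact Set.mem_iUnion.2 ⟨none, hxU⟩
    have hdense : Dense (⋃ o, interior (C o)) :=
      dense_iUnion_interior_of_closed hCclosed hcover
    obtain ⟨u, hu⟩ := hUne
    obtain ⟨y, hyi, hyU⟩ := hdense.exists_mem_open hUop ⟨u, hu⟩
    obtain ⟨o, hyo⟩ := Set.mem_iUnion.1 hyi
    obtain (_ | m) := o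
    · exact absurd hyU (interior_subset hyo)
    -- W := U ∩ interior (closure (piece m)) is nonempty open
    set W : Set (Fin n → ℝ) := U ∩ interior (closure (piece m)) with hW
    have hWne : W.Nonempty := ⟨y, hyU, hyo⟩
    have hWop : IsOpen W := hUop.inter isOpen_interior
    -- every p ∈ E m vanishes on closure (piece m), hence on W, hence everywhere
    have hEzero : ∀ p ∈ E m, ∀ x, MvPolynomial.eval x p = 0 := by
      intro p hp
      apply eval_zero_of_open p W hWne hWop
      intro x hx
      have hxcl : x ∈ closure (piece m) := interior_subset hx.2
      have hsub : closure (piece m) ⊆ {x | MvPolynomial.eval x p = 0} := by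
        apply closure_minimal
        · intro z hz; exact hz.1 p hp
        · exact isClosed_eq (eval_continuous p) continuous_const
      exact hsub hxcl
    -- hence piece m is open
    have hpieceEq : piece m = ⋂ p ∈ I m, {x | 0 < MvPolynomial.eval x p} := by
      ext x
      simp only [hpiece, Set.mem_setOf_eq, Set.mem_iInter]
      constructor
      · rintro ⟨_, h2⟩; exact h2
      · intro h; exact ⟨fun p hp => hEzero p hp x, h⟩
    have hpieceOpen : IsOpen (piece m) := by
      rw [hpieceEq]
      exact isOpen_biInter_finset fun p _ =>
        isOpen_lt continuous_const (eval_continuous p)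
    -- V := W ∩ piece m
    refine ⟨W ∩ piece m, ?_, hWop.inter hpieceOpen, fun x hx => hx.1.1, Or.inl ?_⟩
    · obtain ⟨w, hw⟩ := hWne
      have hwcl : w ∈ closure (piece m) := interior_subset hw.2
      rw [mem_closure_iff] at hwcl
      obtain ⟨z, hz1, hz2⟩ := hwcl W hWop hw
      exact ⟨z, hz1, hz2⟩
    · intro x hx
      rw [hrep]
      exact Set.mem_iUnion.2 ⟨m, hx.2⟩

theorem stmt12 (Γ₁ Γ₂ : Set (Fin 3 → ℝ))
    (h₁ : IsSemialgebraic Γ₁) (h₂ : IsSemialgebraic Γ₂)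
    (U : Set (Fin 3 → ℝ)) (hUne : U.Nonempty) (hUop : IsOpen U)
    (hUsa : IsSemialgebraic U) :
    ∃ V : Set (Fin 3 → ℝ), V.Nonempty ∧ IsOpen V ∧ V ⊆ U ∧
      ((∀ S : Set (Fin 3 → ℝ), S ⊆ V → (Γ₁ \ S) ∪ Γ₂ = Γ₁ ∪ Γ₂) ∨
       (V ⊆ interior (Γ₁ ∪ Γ₂) ∧
        ∀ S : Set (Fin 3 → ℝ), S ⊆ V → (Γ₁ \ S) ∪ Γ₂ = (Γ₁ ∪ Γ₂) \ S)) := by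
  obtain ⟨V₁, hV₁ne, hV₁op, hV₁U, hV₁alt⟩ := partition_lemma Γ₁ h₁ U hUne hUop
  obtain ⟨V, hVne, hVop, hVV₁, hValt⟩ := partition_lemma Γ₂ h₂ V₁ hV₁ne hV₁op
  refine ⟨V, hVne, hVop, hVV₁.trans hV₁U, ?_⟩
  -- helper for case (i): V ∩ Γ₁ ⊆ Γ₂
  have case1 : (∀ x ∈ V, x ∈ Γ₁ → x ∈ Γ₂) →
      ∀ S : Set (Fin 3 → ℝ), S ⊆ V → (Γ₁ \ S) ∪ Γ₂ = Γ₁ ∪ Γ₂ := by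
    intro hkey S hSV
    ext x
    constructor
    · rintro (⟨h, _⟩ | h)
      · exact Or.inl h
      · exact Or.inr h
    · rintro (h | h)
      · by_cases hS : x ∈ S
        · exact Or.inr (hkey x (hSV hS) h)
        · exact Or.inl ⟨h, hS⟩
      · exact Or.inr h
  rcases hV₁alt with hV₁Γ | hV₁Γ
  · -- V ⊆ V₁ ⊆ Γ₁
    rcases hValt with hVΓ₂ | hVΓ₂
    · -- V ⊆ Γ₂ : case (i)
      exact Or.inl (case1 fun x hx _ => hVΓ₂ hx)
    · -- V ∩ Γ₂ = ∅ and V ⊆ Γ₁ : case (ii)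
      refine Or.inr ⟨?_, ?_⟩
      · intro x hx
        exact interior_maximal (fun y hy => Or.inl (hV₁Γ (hVV₁ hy))) hVop hx
      · intro S hSV
        ext x
        constructor
        · rintro (⟨h1, h2⟩ | h)
          · exact ⟨Or.inl h1, h2⟩
          · refine ⟨Or.inr h, fun hS => ?_⟩
            exact Set.eq_empty_iff_forall_notMem.1 hVΓ₂ x ⟨hSV hS, h⟩
        · rintro ⟨(h | h), h2⟩
          · exact Or.inl ⟨h, h2⟩
          · exact Or.inr h
  · -- V₁ ∩ Γ₁ = ∅ : case (i)
    refine Or.inl (case1 fun x hx hΓ₁ => ?_)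
    exact absurd ⟨hVV₁ hx, hΓ₁⟩ (Set.eq_empty_iff_forall_notMem.1 hV₁Γ x)
end

section
/- Let V ⊆ ℝ³ be open, let f : V → ℝ be a regular function (continuous and in each coordinate strictly monotone or constant), and let τ(■) ⊆ V be a closed ball with boundary sphere τ(□). Then π_{3,4}({(x,y,z,v) : (x,y,z) ∈ τ(■), v = f(x,y,z)}) = π_{3,4}({(x,y,z,v) : (x,y,z) ∈ τ(□), v = f(x,y,z)}), where π_{3,4}(x,y,z,v) = (z,v). -/
open Set

/-! Through a point `p` of the ball, the line parallel to the first axis meets the sphere in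
two points `a`, `b` on either side of `p`. As `f` is monotone along that line, `f p` lies between
`f a` and `f b`. Both points lie on the horizontal circle of the sphere at height `p 2`, which is
connected, so by the intermediate value theorem `f` takes the value `f p` on that circle. -/

open Metric

theorem exists_nonneg_add_smul_mem_sphere {E : Type*} [NormedAddCommGroup E] [NormedSpace ℝ E]
    {c p : E} {r : ℝ} (hp : p ∈ closedBall c r) {v : E} (hv : v ≠ 0) :
    ∃ s : ℝ, 0 ≤ s ∧ p + s • v ∈ sphere c r := by
  have hpc : dist p c ≤ r := mem_closedBall.mp hp
  set S := (r + dist p c) / ‖v‖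
  have hS : 0 ≤ S := div_nonneg (by linarith [dist_nonneg (x := p) (y := c)]) (norm_nonneg v)
  have hfar : r ≤ dist (p + S • v) c := by
    have hSv : ‖S • v‖ = r + dist p c := by
      rw [norm_smul, Real.norm_of_nonneg hS, div_mul_cancel₀ _ (norm_ne_zero_iff.mpr hv)]
    have := dist_triangle (p + S • v) c p
    rw [dist_self_add_left, dist_comm c] at this
    linarith
  obtain ⟨s, hs, hs'⟩ := intermediate_value_Icc hS
    (f := fun s : ℝ => dist (p + s • v) c) (by fun_prop) ⟨by simpa using hpc, hfar⟩
  exact ⟨s, hs.1, hs'⟩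

theorem RegularOn.monotoneOn_or_antitoneOn_line {n : ℕ} {f : (Fin n → ℝ) → ℝ}
    {A : Set (Fin n → ℝ)} (hf : RegularOn f A) (i : Fin n) (x : Fin n → ℝ) :
    MonotoneOn (fun s : ℝ => f (x + s • Pi.single i 1)) {s | x + s • Pi.single i 1 ∈ A} ∨
      AntitoneOn (fun s : ℝ => f (x + s • Pi.single i 1)) {s | x + s • Pi.single i 1 ∈ A} := by
  have hoff : ∀ s t : ℝ, ∀ j ≠ i,
      (x + s • Pi.single i 1 : Fin n → ℝ) j = (x + t • Pi.single i 1 : Fin n → ℝ) j := by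
    intro s t j hj
    simp [hj]
  have hon : ∀ s : ℝ, (x + s • Pi.single i 1 : Fin n → ℝ) i = x i + s := by simp
  rcases hf.2 i with hmono | hanti | hconst
  · exact Or.inl <| StrictMonoOn.monotoneOn fun s hs t ht hst =>
      hmono _ hs _ ht (hoff s t) (by simpa [hon])
  · exact Or.inr <| StrictAntiOn.antitoneOn fun s hs t ht hst =>
      hanti _ hs _ ht (hoff s t) (by simpa [hon])
  · exact Or.inl fun s hs t ht _ => (hconst _ hs _ ht (hoff s t)).le

lemma EuclideanSpace.dist_sq_eq_fin_three (x y : EuclideanSpace ℝ (Fin 3)) :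
    dist x y ^ 2 = (x 0 - y 0) ^ 2 + (x 1 - y 1) ^ 2 + (x 2 - y 2) ^ 2 := by
  rw [EuclideanSpace.dist_eq, Real.sq_sqrt (by positivity), Fin.sum_univ_three]
  simp [Real.dist_eq, sq_abs]

/- A nonempty horizontal slice of the sphere is the image of a circle in the plane under
`v ↦ (c₀ + v₀, c₁ + v₁, z)`. -/
theorem isPreconnected_sphere_inter_apply_two_eq (c : EuclideanSpace ℝ (Fin 3)) (r z : ℝ) :
    IsPreconnected {q ∈ sphere c r | q 2 = z} := by
  rcases eq_empty_or_nonempty {q ∈ sphere c r | q 2 = z} with h | ⟨q₀, hq₀, hq₀z⟩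
  · rw [h]
    exact isPreconnected_empty
  let L : EuclideanSpace ℝ (Fin 2) → EuclideanSpace ℝ (Fin 3) :=
    fun v => !₂[c 0 + v 0, c 1 + v 1, z]
  have hdist : ∀ v, dist (L v) c ^ 2 = ‖v‖ ^ 2 + (z - c 2) ^ 2 := fun v => by
    rw [EuclideanSpace.dist_sq_eq_fin_three, EuclideanSpace.real_norm_sq_eq, Fin.sum_univ_two]
    simp [L]
  have hL : ∀ q : EuclideanSpace ℝ (Fin 3), q 2 = z → L !₂[q 0 - c 0, q 1 - c 1] = q := by
    intro q hq
    ext i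
    fin_cases i <;> simp [L, hq]
  set ρ := ‖(!₂[q₀ 0 - c 0, q₀ 1 - c 1] : EuclideanSpace ℝ (Fin 2))‖
  have hr : dist q₀ c = r := hq₀
  have hρ : r ^ 2 = ρ ^ 2 + (z - c 2) ^ 2 := by rw [← hdist, hL q₀ hq₀z, hr]
  have hL_mem : ∀ v, L v ∈ sphere c r ↔ ‖v‖ = ρ := fun v => by
    rw [mem_sphere, ← sq_eq_sq₀ dist_nonneg (hr ▸ dist_nonneg),
      ← sq_eq_sq₀ (norm_nonneg _) (norm_nonneg _), hdist, hρ, add_left_inj]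
  have hslice : {q ∈ sphere c r | q 2 = z} = L '' sphere 0 ρ := by
    ext q
    constructor
    · rintro ⟨hq, hqz⟩
      refine ⟨_, ?_, hL q hqz⟩
      rw [mem_sphere_zero_iff_norm, ← hL_mem, hL q hqz]
      exact hq
    · rintro ⟨v, hv, rfl⟩
      exact ⟨(hL_mem v).mpr (mem_sphere_zero_iff_norm.mp hv), by simp [L]⟩
  rw [hslice]
  refine (isPreconnected_sphere ?_ _ _).image _ (by fun_prop)
  rw [← Module.finrank_eq_rank, finrank_euclideanSpace_fin]
  norm_num

theorem exists_mem_sphere_apply_two_eq_of_mem_closedBall {V : Set (EuclideanSpace ℝ (Fin 3))}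
    {f : EuclideanSpace ℝ (Fin 3) → ℝ}
    (hf : RegularOn (fun x => f (WithLp.toLp 2 x)) (WithLp.toLp 2 ⁻¹' V))
    {c p : EuclideanSpace ℝ (Fin 3)} {r : ℝ} (hball : closedBall c r ⊆ V)
    (hp : p ∈ closedBall c r) :
    ∃ q ∈ sphere c r, q 2 = p 2 ∧ f q = f p := by
  set e : EuclideanSpace ℝ (Fin 3) := EuclideanSpace.single 0 1
  set C := {q ∈ sphere c r | q 2 = p 2}
  have hfC : ContinuousOn f C :=
    (hf.1.comp (PiLp.continuous_ofLp 2 _).continuousOn fun x hx => by simpa using hx).mono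
      fun q hq => hball (sphere_subset_closedBall hq.1)
  have hC : ∀ s : ℝ, p + s • e ∈ sphere c r → p + s • e ∈ C := fun s h => ⟨h, by simp [e]⟩
  have hline : ∀ s : ℝ, p + s • e ∈ closedBall c r →
      s ∈ {s : ℝ | p.ofLp + s • Pi.single 0 1 ∈ WithLp.toLp 2 ⁻¹' V} := fun _ h => hball h
  have he : e ≠ 0 := by simp [e]
  obtain ⟨t, ht, hright⟩ := exists_nonneg_add_smul_mem_sphere hp he
  obtain ⟨s, hs, hleft⟩ := exists_nonneg_add_smul_mem_sphere hp (neg_ne_zero.mpr he)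
  rw [smul_neg, ← neg_smul] at hleft
  have h0 := hline 0 (by simpa using hp)
  have hs' := hline _ (sphere_subset_closedBall hleft)
  have ht' := hline _ (sphere_subset_closedBall hright)
  have hfp : f p = f (p + (0 : ℝ) • e) := by simp
  obtain ⟨a, haC, b, hbC, hab⟩ : ∃ a ∈ C, ∃ b ∈ C, f p ∈ Icc (f a) (f b) := by
    rcases hf.monotoneOn_or_antitoneOn_line 0 p.ofLp with hmono | hanti
    · exact ⟨_, hC _ hleft, _, hC _ hright,
        hfp ▸ hmono hs' h0 (by linarith), hfp ▸ hmono h0 ht' ht⟩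
    · exact ⟨_, hC _ hright, _, hC _ hleft,
        hfp ▸ hanti h0 ht' ht, hfp ▸ hanti hs' h0 (by linarith)⟩
  obtain ⟨q, ⟨hq, hq2⟩, hfq⟩ :=
    (isPreconnected_sphere_inter_apply_two_eq c r (p 2)).intermediate_value haC hbC hfC hab
  exact ⟨q, hq, hq2, hfq⟩

theorem stmt14_general (V : Set (EuclideanSpace ℝ (Fin 3)))
    (f : EuclideanSpace ℝ (Fin 3) → ℝ) (hf : RegularOn (fun x => f (WithLp.toLp 2 x)) (WithLp.toLp 2 ⁻¹' V))
    (c : EuclideanSpace ℝ (Fin 3)) (r : ℝ)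
    (hball : Metric.closedBall c r ⊆ V) :
    (fun q : EuclideanSpace ℝ (Fin 3) × ℝ => (q.1 2, q.2)) ''
        {q | q.1 ∈ Metric.closedBall c r ∧ q.2 = f q.1} =
      (fun q : EuclideanSpace ℝ (Fin 3) × ℝ => (q.1 2, q.2)) ''
        {q | q.1 ∈ Metric.sphere c r ∧ q.2 = f q.1} := by
  refine Subset.antisymm ?_ (image_mono fun q hq => ⟨sphere_subset_closedBall hq.1, hq.2⟩)
  rintro _ ⟨⟨p, v⟩, ⟨hp, hv : v = f p⟩, rfl⟩
  obtain ⟨q, hq, hq2, hfq⟩ := exists_mem_sphere_apply_two_eq_of_mem_closedBall hf hball hp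
  exact ⟨(q, f q), ⟨hq, rfl⟩, by simp [hq2, hfq, hv]⟩

theorem stmt14 (V : Set (EuclideanSpace ℝ (Fin 3))) (hVop : IsOpen V)
    (f : EuclideanSpace ℝ (Fin 3) → ℝ) (hf : RegularOn (fun x => f (WithLp.toLp 2 x)) (WithLp.toLp 2 ⁻¹' V))
    (c : EuclideanSpace ℝ (Fin 3)) (r : ℝ) (hr : 0 < r)
    (hball : Metric.closedBall c r ⊆ V) :
    (fun q : EuclideanSpace ℝ (Fin 3) × ℝ => (q.1 2, q.2)) ''
        {q | q.1 ∈ Metric.closedBall c r ∧ q.2 = f q.1} =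
      (fun q : EuclideanSpace ℝ (Fin 3) × ℝ => (q.1 2, q.2)) ''
        {q | q.1 ∈ Metric.sphere c r ∧ q.2 = f q.1} :=
  stmt14_general V f hf c r hball
end

section
/- Let f : V → ℝ be continuous on an open V ⊆ ℝ³ and in each coordinate strictly monotone or constant, and suppose f is strictly monotone in the first coordinate. Then the map h : V → ℝ³, h(x,y,z) = (y, z, f(x,y,z)), is injective and is a homeomorphism onto its image. -/
open Set Filter Topology

lemma key0 (V : Set (Fin 3 → ℝ)) (hVop : IsOpen V)
    (f : (Fin 3 → ℝ) → ℝ) (hc : ContinuousOn f V)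
    (hinc : ∀ x ∈ V, ∀ y ∈ V, (∀ j, j ≠ (0 : Fin 3) → x j = y j) → x 0 < y 0 → f x < f y)
    (a : Fin 3 → ℝ) (ha : a ∈ V) (u : ℕ → Fin 3 → ℝ) (hu : ∀ n, u n ∈ V)
    (h1 : Tendsto (fun n => u n 1) atTop (𝓝 (a 1)))
    (h2 : Tendsto (fun n => u n 2) atTop (𝓝 (a 2)))
    (hfu : Tendsto (fun n => f (u n)) atTop (𝓝 (f a))) :
    Tendsto (fun n => u n 0) atTop (𝓝 (a 0)) := by
  obtain ⟨ε, hε, hball⟩ := Metric.isOpen_iff.mp hVop a ha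
  rw [Metric.tendsto_atTop]
  intro δ' hδ'
  set δ : ℝ := min δ' (ε / 2) with hδdef
  have hδpos : 0 < δ := lt_min hδ' (by linarith)
  have hδle : δ ≤ ε / 2 := min_le_right _ _
  -- the two shifted points
  set ap := Function.update a 0 (a 0 + δ) with hap
  set am := Function.update a 0 (a 0 - δ) with ham
  have hmem : ∀ c : ℝ, |c - a 0| < ε → Function.update a 0 c ∈ V := by
    intro c hcl
    apply hball
    rw [Metric.mem_ball, dist_pi_lt_iff hε]
    intro i
    rcases eq_or_ne i 0 with rfl | hi
    · simpa [Real.dist_eq] using hcl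
    · simp [Function.update_of_ne hi, hε]
  have haux1 : |a 0 + δ - a 0| = δ := by
    rw [add_sub_cancel_left, abs_of_pos hδpos]
  have haux2 : |a 0 - δ - a 0| = δ := by
    rw [show a 0 - δ - a 0 = -δ by ring, abs_neg, abs_of_pos hδpos]
  have hapV : ap ∈ V := hmem _ (by rw [haux1]; linarith)
  have hamV : am ∈ V := hmem _ (by rw [haux2]; linarith)
  have hfam : f am < f a := by
    apply hinc am hamV a ha
    · intro j hj; simp [ham, Function.update_of_ne hj]
    · simp only [ham, Function.update_self]; linarith
  have hfap : f a < f ap := by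
    apply hinc a ha ap hapV
    · intro j hj; simp [hap, Function.update_of_ne hj]
    · simp only [hap, Function.update_self]; linarith
  -- the comparison sequences
  set bp : ℕ → Fin 3 → ℝ := fun n => Function.update (u n) 0 (a 0 + δ) with hbp
  set bm : ℕ → Fin 3 → ℝ := fun n => Function.update (u n) 0 (a 0 - δ) with hbm
  have hbtend : ∀ c : ℝ, Tendsto (fun n => Function.update (u n) 0 c) atTop
      (𝓝 (Function.update a 0 c)) := by
    intro c
    rw [tendsto_pi_nhds]
    intro i
    rcases eq_or_ne i 0 with rfl | hi
    · simp
    · simp only [Function.update_of_ne hi]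
      fin_cases i
      · simp at hi
      · exact h1
      · exact h2
  have hfbp : Tendsto (fun n => f (bp n)) atTop (𝓝 (f ap)) :=
    ((hc.continuousAt (hVop.mem_nhds hapV)).tendsto).comp (hbtend _)
  have hfbm : Tendsto (fun n => f (bm n)) atTop (𝓝 (f am)) :=
    ((hc.continuousAt (hVop.mem_nhds hamV)).tendsto).comp (hbtend _)
  -- eventually b n ∈ V
  have hev1 : ∀ᶠ n in atTop, |u n 1 - a 1| < ε / 2 := by
    have := (Metric.tendsto_atTop.mp h1) (ε / 2) (by linarith)
    rw [eventually_atTop]; simpa [Real.dist_eq] using this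
  have hev2 : ∀ᶠ n in atTop, |u n 2 - a 2| < ε / 2 := by
    have := (Metric.tendsto_atTop.mp h2) (ε / 2) (by linarith)
    rw [eventually_atTop]; simpa [Real.dist_eq] using this
  have hbV : ∀ n, |u n 1 - a 1| < ε / 2 → |u n 2 - a 2| < ε / 2 →
      ∀ c : ℝ, |c - a 0| ≤ ε / 2 → Function.update (u n) 0 c ∈ V := by
    intro n hn1 hn2 c hcl
    apply hball
    rw [Metric.mem_ball, dist_pi_lt_iff hε]
    intro i
    rcases eq_or_ne i 0 with rfl | hi
    · rw [Function.update_self, Real.dist_eq]; linarith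
    · rw [Function.update_of_ne hi, Real.dist_eq]
      fin_cases i
      · exact absurd rfl hi
      · show |u n 1 - a 1| < ε; linarith
      · show |u n 2 - a 2| < ε; linarith
  have hevp : ∀ᶠ n in atTop, f (u n) < f (bp n) := hfu.eventually_lt hfbp hfap
  have hevm : ∀ᶠ n in atTop, f (bm n) < f (u n) := hfbm.eventually_lt hfu hfam
  have : ∀ᶠ n in atTop, dist (u n 0) (a 0) < δ' := by
    filter_upwards [hev1, hev2, hevp, hevm] with n hn1 hn2 hp hm
    have hbpV : bp n ∈ V := hbV n hn1 hn2 _ (le_of_eq haux1 |>.trans_eq rfl |>.trans hδle)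
    have hbmV : bm n ∈ V := hbV n hn1 hn2 _ (le_of_eq haux2 |>.trans hδle)
    have heqc : ∀ c : ℝ, ∀ j : Fin 3, j ≠ 0 → u n j = Function.update (u n) 0 c j := by
      intro c j hj; simp [Function.update_of_ne hj]
    have hlt : u n 0 < a 0 + δ := by
      by_contra hcon
      push_neg at hcon
      rcases eq_or_lt_of_le hcon with heq | hlt'
      · have : u n = bp n := by
          funext j
          rcases eq_or_ne j 0 with rfl | hj
          · simp [hbp, ← heq]
          · simp [hbp, Function.update_of_ne hj]
        rw [this] at hp; exact lt_irrefl _ hp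
      · have := hinc (bp n) hbpV (u n) (hu n)
          (fun j hj => (heqc _ j hj).symm) (by simpa [hbp] using hlt')
        linarith
    have hgt : a 0 - δ < u n 0 := by
      by_contra hcon
      push_neg at hcon
      rcases eq_or_lt_of_le hcon with heq | hlt'
      · have : u n = bm n := by
          funext j
          rcases eq_or_ne j 0 with rfl | hj
          · simp [hbm, heq]
          · simp [hbm, Function.update_of_ne hj]
        rw [this] at hm; exact lt_irrefl _ hm
      · have := hinc (u n) (hu n) (bm n) hbmV (heqc _) (by simpa [hbm] using hlt')
        linarith
    rw [Real.dist_eq, abs_lt]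
    constructor
    · have : δ ≤ δ' := min_le_left _ _
      linarith
    · have : δ ≤ δ' := min_le_left _ _
      linarith
  rw [eventually_atTop] at this
  exact this

theorem stmt16 (V : Set (Fin 3 → ℝ)) (hVop : IsOpen V)
    (f : (Fin 3 → ℝ) → ℝ) (hf : RegularOn f V)
    (hmono :
      (∀ x ∈ V, ∀ y ∈ V, (∀ j, j ≠ (0 : Fin 3) → x j = y j) → x 0 < y 0 → f x < f y) ∨
      (∀ x ∈ V, ∀ y ∈ V, (∀ j, j ≠ (0 : Fin 3) → x j = y j) → x 0 < y 0 → f y < f x)) :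
    Set.InjOn (fun x : Fin 3 → ℝ => ![x 1, x 2, f x]) V ∧
    Topology.IsEmbedding (fun p : V => ![p.1 1, p.1 2, f p.1]) := by
  have hfc := hf.1
  -- injectivity
  have hinj : Set.InjOn (fun x : Fin 3 → ℝ => ![x 1, x 2, f x]) V := by
    intro x hx y hy heq
    simp only at heq
    have e1 : x 1 = y 1 := congrFun heq 0
    have e2 : x 2 = y 2 := congrFun heq 1
    have ef : f x = f y := congrFun heq 2
    have hco : ∀ j : Fin 3, j ≠ 0 → x j = y j := by
      intro j hj
      fin_cases j
      · exact absurd rfl hj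
      · exact e1
      · exact e2
    funext j
    fin_cases j
    · show x 0 = y 0
      by_contra h0
      rcases lt_or_gt_of_ne h0 with hlt | hgt
      · rcases hmono with hm | hm
        · exact absurd ef (ne_of_lt (hm x hx y hy hco hlt))
        · exact absurd ef.symm (ne_of_lt (hm x hx y hy hco hlt))
      · have hco' : ∀ j : Fin 3, j ≠ 0 → y j = x j := fun j hj => (hco j hj).symm
        rcases hmono with hm | hm
        · exact absurd ef.symm (ne_of_lt (hm y hy x hx hco' hgt))
        · exact absurd ef (ne_of_lt (hm y hy x hx hco' hgt))
    · exact e1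
    · exact e2
  refine ⟨hinj, ?_⟩
  have hcont : Continuous (fun p : V => ![p.1 1, p.1 2, f p.1]) := by
    refine continuous_pi fun i => ?_
    fin_cases i
    · exact (continuous_apply (1 : Fin 3)).comp continuous_subtype_val
    · exact (continuous_apply (2 : Fin 3)).comp continuous_subtype_val
    · exact hfc.restrict
  refine ⟨Topology.isInducing_iff_nhds.mpr fun a => ?_, ?_⟩
  · refine le_antisymm (hcont.tendsto a).le_comap ?_
    rw [← Filter.tendsto_id']
    rw [Filter.tendsto_iff_seq_tendsto]
    intro seq hseq
    rw [Filter.tendsto_comap_iff] at hseq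
    have hcall := tendsto_pi_nhds.mp hseq
    have h1 : Filter.Tendsto (fun n => (seq n).1 1) Filter.atTop (𝓝 (a.1 1)) := hcall 0
    have h2 : Filter.Tendsto (fun n => (seq n).1 2) Filter.atTop (𝓝 (a.1 2)) := hcall 1
    have hfu : Filter.Tendsto (fun n => f (seq n).1) Filter.atTop (𝓝 (f a.1)) := hcall 2
    show Filter.Tendsto seq Filter.atTop (𝓝 a)
    rw [tendsto_subtype_rng]
    rw [tendsto_pi_nhds]
    intro i
    fin_cases i
    · show Filter.Tendsto (fun n => (seq n).1 0) Filter.atTop (𝓝 (a.1 0))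
      rcases hmono with hm | hm
      · exact key0 V hVop f hfc hm a.1 a.2 (fun n => (seq n).1) (fun n => (seq n).2) h1 h2 hfu
      · exact key0 V hVop (fun x => -f x) hfc.neg
          (fun x hx y hy hco hlt => neg_lt_neg (hm x hx y hy hco hlt))
          a.1 a.2 (fun n => (seq n).1) (fun n => (seq n).2) h1 h2 hfu.neg
    · exact h1
    · exact h2
  · intro p q hpq
    exact Subtype.ext (hinj p.2 q.2 hpq)
end
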